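/- Let I ⊆ [0, ∞) be Lebesgue-measurable. Define F : [0,1] → [0,1] by F(κ) = liminf_{r→+∞} (1/r)·|I ∩ [κr, r]|, define Θ_∞(I) = liminf_{r→+∞} |I ∩ [0, r]|/r, and define κ_⋆(I) = inf{κ ∈ [0,1] : F(κ) = 0}. Then: (a) F is non-increasing and 1-Lipschitz, i.e. |F(κ₂) − F(κ₁)| ≤ |κ₂ − κ₁| for all κ₁, κ₂ ∈ [0,1] (in particular the set {κ : F(κ) = 0} is nonempty, since it contains κ = 1, and the infimum κ_⋆(I) is attained); (b) Θ_∞(I) ≤ κ_⋆(I); (c) κ_⋆(I) = 0 if and only if Θ_∞(I) = 0. -/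
import Mathlib


open MeasureTheory Filter

noncomputable section

/-- `F(κ) = liminf_{r→+∞} (1/r)|I ∩ [κr, r]|`. -/
def Fdens (I : Set ℝ) (κ : ℝ) : ℝ :=
  liminf (fun r : ℝ => (volume (I ∩ Set.Icc (κ * r) r)).toReal / r) atTop

/-- The lower density of `I` at infinity: `Θ_∞(I) = liminf_{r→+∞} |I ∩ [0,r]|/r`. -/
def ThetaInf (I : Set ℝ) : ℝ :=
  liminf (fun r : ℝ => (volume (I ∩ Set.Icc 0 r)).toReal / r) atTop

/-- `κ_⋆(I) = inf {κ ∈ [0,1] : F(κ) = 0}`. -/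
def kappaStar (I : Set ℝ) : ℝ :=
  sInf {κ : ℝ | κ ∈ Set.Icc (0 : ℝ) 1 ∧ Fdens I κ = 0}

namespace Stmt19Aux

/-- The quotient whose liminf defines `Fdens`. -/
def g (I : Set ℝ) (κ r : ℝ) : ℝ := (volume (I ∩ Set.Icc (κ * r) r)).toReal / r

lemma fdens_eq (I : Set ℝ) (κ : ℝ) : Fdens I κ = liminf (g I κ) atTop := rfl

lemma vol_ne_top (I : Set ℝ) (a b : ℝ) : volume (I ∩ Set.Icc a b) ≠ ⊤ :=
  ((measure_mono Set.inter_subset_right).trans_lt measure_Icc_lt_top).ne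

lemma ev_bounds (I : Set ℝ) {κ : ℝ} (hκ0 : 0 ≤ κ) (hκ1 : κ ≤ 1) :
    ∀ᶠ r in atTop, 0 ≤ g I κ r ∧ g I κ r ≤ 1 := by
  filter_upwards [eventually_ge_atTop (1 : ℝ)] with r hr
  have hr0 : (0 : ℝ) < r := lt_of_lt_of_le one_pos hr
  constructor
  · exact div_nonneg ENNReal.toReal_nonneg hr0.le
  · have h1 : volume (I ∩ Set.Icc (κ * r) r) ≤ ENNReal.ofReal (r - κ * r) := by
      rw [← Real.volume_Icc]
      exact measure_mono Set.inter_subset_right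
    have h2 : (volume (I ∩ Set.Icc (κ * r) r)).toReal ≤ r - κ * r := by
      have := ENNReal.toReal_mono ENNReal.ofReal_ne_top h1
      rwa [ENNReal.toReal_ofReal (by nlinarith)] at this
    unfold g
    rw [div_le_one hr0]
    nlinarith

lemma bdd_le (I : Set ℝ) {κ : ℝ} (hκ0 : 0 ≤ κ) (hκ1 : κ ≤ 1) :
    IsBoundedUnder (· ≤ ·) atTop (g I κ) :=
  ⟨1, eventually_map.2 <| (ev_bounds I hκ0 hκ1).mono fun _ h => h.2⟩

lemma bdd_ge (I : Set ℝ) {κ : ℝ} (hκ0 : 0 ≤ κ) (hκ1 : κ ≤ 1) :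
    IsBoundedUnder (· ≥ ·) atTop (g I κ) :=
  ⟨0, eventually_map.2 <| (ev_bounds I hκ0 hκ1).mono fun _ h => h.1⟩

lemma cobdd_ge (I : Set ℝ) {κ : ℝ} (hκ0 : 0 ≤ κ) (hκ1 : κ ≤ 1) :
    IsCoboundedUnder (· ≥ ·) atTop (g I κ) :=
  (bdd_le I hκ0 hκ1).isCoboundedUnder_ge

lemma fdens_nonneg (I : Set ℝ) {κ : ℝ} (hκ0 : 0 ≤ κ) (hκ1 : κ ≤ 1) :
    0 ≤ Fdens I κ :=
  le_liminf_of_le (cobdd_ge I hκ0 hκ1) ((ev_bounds I hκ0 hκ1).mono fun _ h => h.1)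

lemma ev_mono (I : Set ℝ) {κ₁ κ₂ : ℝ} (hκ0 : 0 ≤ κ₁) (h12 : κ₁ ≤ κ₂) :
    ∀ᶠ r in atTop, g I κ₂ r ≤ g I κ₁ r := by
  filter_upwards [eventually_ge_atTop (1 : ℝ)] with r hr
  have hr0 : (0 : ℝ) < r := lt_of_lt_of_le one_pos hr
  have hsub : I ∩ Set.Icc (κ₂ * r) r ⊆ I ∩ Set.Icc (κ₁ * r) r :=
    Set.inter_subset_inter_right I
      (Set.Icc_subset_Icc (mul_le_mul_of_nonneg_right h12 hr0.le) le_rfl)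
  have := ENNReal.toReal_mono (vol_ne_top I _ _) (measure_mono hsub)
  exact div_le_div_of_nonneg_right this hr0.le

lemma ev_lip (I : Set ℝ) {κ₁ κ₂ : ℝ} (hκ0 : 0 ≤ κ₁) (h12 : κ₁ ≤ κ₂) (hκ1 : κ₂ ≤ 1) :
    ∀ᶠ r in atTop, g I κ₁ r ≤ g I κ₂ r + (κ₂ - κ₁) := by
  filter_upwards [eventually_ge_atTop (1 : ℝ)] with r hr
  have hr0 : (0 : ℝ) < r := lt_of_lt_of_le one_pos hr
  have hle : κ₁ * r ≤ κ₂ * r := mul_le_mul_of_nonneg_right h12 hr0.le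
  have hsub : I ∩ Set.Icc (κ₁ * r) r ⊆
      (I ∩ Set.Icc (κ₁ * r) (κ₂ * r)) ∪ (I ∩ Set.Icc (κ₂ * r) r) := by
    rw [← Set.inter_union_distrib_left]
    exact Set.inter_subset_inter_right I (Set.Icc_subset_Icc_union_Icc)
  have hv : volume (I ∩ Set.Icc (κ₁ * r) r) ≤
      ENNReal.ofReal ((κ₂ - κ₁) * r) + volume (I ∩ Set.Icc (κ₂ * r) r) := by
    refine (measure_mono hsub).trans ?_
    refine (measure_union_le _ _).trans (add_le_add ?_ le_rfl)
    refine (measure_mono Set.inter_subset_right).trans ?_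
    rw [Real.volume_Icc]
    exact le_of_eq (congrArg ENNReal.ofReal (by ring))
  have hvr : (volume (I ∩ Set.Icc (κ₁ * r) r)).toReal ≤
      (κ₂ - κ₁) * r + (volume (I ∩ Set.Icc (κ₂ * r) r)).toReal := by
    have := ENNReal.toReal_mono
      (by simp [ENNReal.add_ne_top, vol_ne_top I]) hv
    rwa [ENNReal.toReal_add ENNReal.ofReal_ne_top (vol_ne_top I _ _),
      ENNReal.toReal_ofReal (by nlinarith)] at this
  have := div_le_div_of_nonneg_right hvr hr0.le
  rw [add_div, mul_div_assoc, div_self hr0.ne', mul_one] at this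
  unfold g
  linarith

lemma fdens_anti (I : Set ℝ) {κ₁ κ₂ : ℝ} (hκ0 : 0 ≤ κ₁) (h12 : κ₁ ≤ κ₂) (hκ1 : κ₂ ≤ 1) :
    Fdens I κ₂ ≤ Fdens I κ₁ :=
  liminf_le_liminf (ev_mono I hκ0 h12)
    (bdd_ge I (hκ0.trans h12) hκ1) (cobdd_ge I hκ0 (h12.trans hκ1))

lemma fdens_lip (I : Set ℝ) {κ₁ κ₂ : ℝ} (hκ0 : 0 ≤ κ₁) (h12 : κ₁ ≤ κ₂) (hκ1 : κ₂ ≤ 1) :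
    Fdens I κ₁ ≤ Fdens I κ₂ + (κ₂ - κ₁) := by
  have h1 : Fdens I κ₁ ≤ liminf (fun r => g I κ₂ r + (κ₂ - κ₁)) atTop := by
    refine liminf_le_liminf (ev_lip I hκ0 h12 hκ1) (bdd_ge I hκ0 (h12.trans hκ1)) ?_
    refine Filter.isCoboundedUnder_ge_of_eventually_le atTop (x := 1 + (κ₂ - κ₁)) ?_
    exact ((ev_bounds I (hκ0.trans h12) hκ1).mono fun _ h => by linarith [h.2])
  rw [liminf_add_const atTop (g I κ₂) (κ₂ - κ₁)
    (cobdd_ge I (hκ0.trans h12) hκ1) (bdd_ge I (hκ0.trans h12) hκ1)] at h1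
  exact h1

lemma fdens_one (I : Set ℝ) : Fdens I 1 = 0 := by
  have hev : ∀ᶠ r in atTop, g I 1 r = 0 := by
    filter_upwards [eventually_ge_atTop (1 : ℝ)] with r hr
    have h0 : volume (I ∩ ({r} : Set ℝ)) = 0 :=
      measure_mono_null Set.inter_subset_right Real.volume_singleton
    simp [g, Set.Icc_self, h0]
  rw [fdens_eq, liminf_congr hev, liminf_const]

end Stmt19Aux

open Stmt19Aux in
/-- Properties of `κ_⋆`: (a) `F` is non-increasing and 1-Lipschitz on `[0,1]`, `F(1) = 0`,
and the infimum defining `κ_⋆(I)` is attained; (b) `Θ_∞(I) ≤ κ_⋆(I)`;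
(c) `κ_⋆(I) = 0 ↔ Θ_∞(I) = 0`. -/
theorem stmt_19 (I : Set ℝ) (hI : MeasurableSet I) (hI0 : I ⊆ Set.Ici 0) :
    AntitoneOn (Fdens I) (Set.Icc 0 1) ∧
    (∀ κ₁ ∈ Set.Icc (0 : ℝ) 1, ∀ κ₂ ∈ Set.Icc (0 : ℝ) 1,
      |Fdens I κ₂ - Fdens I κ₁| ≤ |κ₂ - κ₁|) ∧
    Fdens I 1 = 0 ∧
    (kappaStar I ∈ Set.Icc (0 : ℝ) 1 ∧ Fdens I (kappaStar I) = 0) ∧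
    ThetaInf I ≤ kappaStar I ∧
    (kappaStar I = 0 ↔ ThetaInf I = 0) := by
  set S := {κ : ℝ | κ ∈ Set.Icc (0 : ℝ) 1 ∧ Fdens I κ = 0} with hS
  have h1S : (1 : ℝ) ∈ S := ⟨⟨zero_le_one, le_rfl⟩, fdens_one I⟩
  have hSne : S.Nonempty := ⟨1, h1S⟩
  have hSbdd : BddBelow S := ⟨0, fun x hx => hx.1.1⟩
  have hks0 : 0 ≤ kappaStar I := le_csInf hSne fun x hx => hx.1.1
  have hks1 : kappaStar I ≤ 1 := csInf_le hSbdd h1S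
  -- Lipschitz on [0,1]
  have hLip : ∀ κ₁ ∈ Set.Icc (0 : ℝ) 1, ∀ κ₂ ∈ Set.Icc (0 : ℝ) 1,
      |Fdens I κ₂ - Fdens I κ₁| ≤ |κ₂ - κ₁| := by
    intro κ₁ hκ₁ κ₂ hκ₂
    rcases le_total κ₁ κ₂ with h | h
    · have ha := fdens_anti I hκ₁.1 h hκ₂.2
      have hl := fdens_lip I hκ₁.1 h hκ₂.2
      rw [abs_of_nonpos (by linarith), abs_of_nonneg (by linarith)]
      linarith
    · have ha := fdens_anti I hκ₂.1 h hκ₁.2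
      have hl := fdens_lip I hκ₂.1 h hκ₁.2
      rw [abs_of_nonneg (by linarith), abs_of_nonpos (by linarith)]
      linarith
  -- F(κ⋆) = 0
  have hFks : Fdens I (kappaStar I) = 0 := by
    refine le_antisymm ?_ (fdens_nonneg I hks0 hks1)
    by_contra hpos
    push_neg at hpos
    obtain ⟨κ, hκS, hκlt⟩ := Real.lt_sInf_add_pos hSne hpos
    have hksκ : kappaStar I ≤ κ := csInf_le hSbdd hκS
    have := hLip κ hκS.1 (kappaStar I) ⟨hks0, hks1⟩
    rw [hκS.2, sub_zero] at this
    rw [abs_of_nonneg (fdens_nonneg I hks0 hks1)] at this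
    rw [abs_of_nonpos (by linarith)] at this
    have h2 : Fdens I (kappaStar I) ≤ κ - kappaStar I := by linarith
    have hκlt' : κ < kappaStar I + Fdens I (kappaStar I) := hκlt
    linarith
  -- Θ = F 0
  have hTheta : ThetaInf I = Fdens I 0 := by
    simp only [ThetaInf, Fdens, zero_mul]
  have hTle : ThetaInf I ≤ kappaStar I := by
    have := hLip (kappaStar I) ⟨hks0, hks1⟩ 0 ⟨le_rfl, zero_le_one⟩
    rw [hFks, sub_zero, zero_sub, abs_neg, abs_of_nonneg hks0,
      abs_of_nonneg (fdens_nonneg I le_rfl zero_le_one)] at this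
    rw [hTheta]
    linarith
  refine ⟨?_, hLip, fdens_one I, ⟨⟨hks0, hks1⟩, hFks⟩, hTle, ?_⟩
  · intro κ₁ hκ₁ κ₂ hκ₂ h
    exact fdens_anti I hκ₁.1 h hκ₂.2
  · constructor
    · intro h
      refine le_antisymm ?_ ?_
      · rw [h] at hTle; exact hTle
      · rw [hTheta]; exact fdens_nonneg I le_rfl zero_le_one
    · intro h
      refine le_antisymm ?_ hks0
      refine csInf_le hSbdd ⟨⟨le_rfl, zero_le_one⟩, ?_⟩
      rw [← hTheta]; exact h
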